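/- arXiv:2510.12757 — 3 statements merged into one kernel-verified Lean document; each statement's English description precedes it below -/
import Mathlib

section
/- Let W ⊆ P be a 2-dimensional subspace and let (u', v') be a q-orthonormal basis of W (q(u') = q(v') = 1, ⟨u',v'⟩ = 0). If u' ∉ L, then the orthogonal projection π_B restricted to R(u',v') is a linear isomorphism from R(u',v') onto B. If u' ∈ L, then R(u',v') = T. -/
noncomputable section

open Quaternion

/-- The split octonions `𝕆' = ℍ × ℍ`. -/
abbrev SplitOct : Type := ℍ[ℝ] × ℍ[ℝ]

namespace SplitOct

/-- Split octonion multiplication `(a,b)(c,d) = (ac + d̄b, da + bc̄)`. -/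
def mul (x y : SplitOct) : SplitOct :=
  (x.1 * y.1 + star y.2 * x.2, y.2 * x.1 + x.2 * star y.1)

/-- Split octonion conjugation `(a,b)* = (ā, −b)`. -/
def conj (x : SplitOct) : SplitOct := (star x.1, -x.2)

lemma conj_add (x y : SplitOct) : conj (x + y) = conj x + conj y := by
  simp only [conj, Prod.fst_add, Prod.snd_add, star_add, Prod.mk_add_mk, neg_add]

lemma conj_neg (x : SplitOct) : conj (-x) = -conj x := by
  simp [conj, Prod.ext_iff]

lemma conj_sub (x y : SplitOct) : conj (x - y) = conj x - conj y := by
  rw [sub_eq_add_neg, conj_add, conj_neg, ← sub_eq_add_neg]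

lemma conj_smul (r : ℝ) (x : SplitOct) : conj (r • x) = r • conj x := by
  simp [conj, Prod.ext_iff]

lemma conj_conj (x : SplitOct) : conj (conj x) = x := by
  simp [conj]

lemma conj_zero : conj 0 = 0 := by
  simp [conj, Prod.ext_iff]

/-- The imaginary split octonions `Im 𝕆' = {x | x* = −x}`. -/
def Im : Submodule ℝ SplitOct where
  carrier := {x | conj x = -x}
  add_mem' := by
    intro a b ha hb
    simp only [Set.mem_setOf_eq] at ha hb ⊢
    rw [conj_add, ha, hb, neg_add]
  zero_mem' := by
    simp only [Set.mem_setOf_eq, conj_zero, neg_zero]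
  smul_mem' := by
    intro r a ha
    simp only [Set.mem_setOf_eq] at ha ⊢
    rw [conj_smul, ha, smul_neg]

lemma mem_Im_iff {x : SplitOct} : x ∈ Im ↔ conj x = -x := Iff.rfl

/-- `q x = x·x*`, read as a real number (its values lie in `ℝ·1 ≅ ℝ`). -/
def q (x : SplitOct) : ℝ := (mul x (conj x)).1.re

/-- The polarization `⟨x,y⟩` of the quadratic form `q`. -/
def polar (x y : SplitOct) : ℝ := (q (x + y) - q x - q y) / 2

/-- The cross product `x × y = (xy − (xy)*)/2`. -/
def cross (x y : SplitOct) : SplitOct := (2 : ℝ)⁻¹ • (mul x y - conj (mul x y))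

/-- The scalar triple product `Ω(u,v,w) = ⟨u×v, w⟩`. -/
def triple (u v w : SplitOct) : ℝ := polar (cross u v) w

lemma q_apply (x : SplitOct) : q x = normSq x.1 - normSq x.2 := by
  simp only [q, mul, conj, star_neg, neg_mul, Quaternion.self_mul_star, Quaternion.star_mul_self,
    Quaternion.re_add, Quaternion.re_neg, Quaternion.re_coe]
  ring

lemma polar_apply (x y : SplitOct) :
    polar x y = (x.1 * star y.1).re - (x.2 * star y.2).re := by
  simp only [polar, q_apply, Prod.fst_add, Prod.snd_add, Quaternion.normSq_def',
    Quaternion.re_mul, Quaternion.re_add, Quaternion.imI_add, Quaternion.imJ_add,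
    Quaternion.imK_add, Quaternion.re_star, Quaternion.imI_star, Quaternion.imJ_star,
    Quaternion.imK_star]
  ring

lemma polar_add_left (x x' y : SplitOct) : polar (x + x') y = polar x y + polar x' y := by
  simp only [polar_apply, Prod.fst_add, Prod.snd_add, add_mul, Quaternion.re_add]
  ring

lemma polar_add_right (x y y' : SplitOct) : polar x (y + y') = polar x y + polar x y' := by
  simp only [polar_apply, Prod.fst_add, Prod.snd_add, star_add, mul_add, Quaternion.re_add]
  ring

lemma polar_smul_left (r : ℝ) (x y : SplitOct) : polar (r • x) y = r * polar x y := by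
  simp only [polar_apply, Prod.smul_fst, Prod.smul_snd, smul_mul_assoc, Quaternion.re_smul,
    smul_eq_mul]
  ring

lemma polar_smul_right (r : ℝ) (x y : SplitOct) : polar x (r • y) = r * polar x y := by
  simp only [polar_apply, Prod.smul_fst, Prod.smul_snd, Quaternion.star_smul,
    mul_smul_comm, Quaternion.re_smul, smul_eq_mul]
  ring

lemma polar_zero_left (y : SplitOct) : polar 0 y = 0 := by
  simp [polar_apply]

lemma polar_zero_right (x : SplitOct) : polar x 0 = 0 := by
  simp [polar_apply]

lemma mul_add_left (x x' y : SplitOct) : mul (x + x') y = mul x y + mul x' y := by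
  simp only [mul, Prod.fst_add, Prod.snd_add, add_mul, mul_add, Prod.mk_add_mk, Prod.mk.injEq]
  constructor <;> abel

lemma mul_add_right (x y y' : SplitOct) : mul x (y + y') = mul x y + mul x y' := by
  simp only [mul, Prod.fst_add, Prod.snd_add, star_add, add_mul, mul_add, Prod.mk_add_mk,
    Prod.mk.injEq]
  constructor <;> abel

lemma mul_smul_left (r : ℝ) (x y : SplitOct) : mul (r • x) y = r • mul x y := by
  simp only [mul, Prod.smul_fst, Prod.smul_snd, smul_mul_assoc, mul_smul_comm, Prod.smul_mk,
    smul_add]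

lemma mul_smul_right (r : ℝ) (x y : SplitOct) : mul x (r • y) = r • mul x y := by
  simp only [mul, Prod.smul_fst, Prod.smul_snd, Quaternion.star_smul, smul_mul_assoc,
    mul_smul_comm, Prod.smul_mk, smul_add]

lemma mul_zero_left (y : SplitOct) : mul 0 y = 0 := by
  simp [mul, Prod.ext_iff]

lemma mul_zero_right (x : SplitOct) : mul x 0 = 0 := by
  simp [mul, Prod.ext_iff]

lemma cross_add_left (x x' y : SplitOct) : cross (x + x') y = cross x y + cross x' y := by
  rw [cross, cross, cross, mul_add_left, conj_add]
  module

lemma cross_add_right (x y y' : SplitOct) : cross x (y + y') = cross x y + cross x y' := by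
  rw [cross, cross, cross, mul_add_right, conj_add]
  module

lemma cross_smul_left (r : ℝ) (x y : SplitOct) : cross (r • x) y = r • cross x y := by
  rw [cross, cross, mul_smul_left, conj_smul]
  module

lemma cross_smul_right (r : ℝ) (x y : SplitOct) : cross x (r • y) = r • cross x y := by
  rw [cross, cross, mul_smul_right, conj_smul]
  module

lemma cross_zero_left (y : SplitOct) : cross 0 y = 0 := by
  simp [cross, mul_zero_left, conj_zero]

lemma cross_zero_right (x : SplitOct) : cross x 0 = 0 := by
  simp [cross, mul_zero_right, conj_zero]

lemma cross_mem_Im (x y : SplitOct) : cross x y ∈ Im := by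
  rw [mem_Im_iff, cross, conj_smul, conj_sub, conj_conj]
  module

lemma triple_add₁ (u u' v w : SplitOct) :
    triple (u + u') v w = triple u v w + triple u' v w := by
  rw [triple, triple, triple, cross_add_left, polar_add_left]

lemma triple_add₂ (u v v' w : SplitOct) :
    triple u (v + v') w = triple u v w + triple u v' w := by
  rw [triple, triple, triple, cross_add_right, polar_add_left]

lemma triple_add₃ (u v w w' : SplitOct) :
    triple u v (w + w') = triple u v w + triple u v w' :=
  polar_add_right _ _ _

lemma triple_smul₁ (r : ℝ) (u v w : SplitOct) : triple (r • u) v w = r * triple u v w := by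
  rw [triple, triple, cross_smul_left, polar_smul_left]

lemma triple_smul₂ (r : ℝ) (u v w : SplitOct) : triple u (r • v) w = r * triple u v w := by
  rw [triple, triple, cross_smul_right, polar_smul_left]

lemma triple_smul₃ (r : ℝ) (u v w : SplitOct) : triple u v (r • w) = r * triple u v w :=
  polar_smul_right _ _ _

lemma triple_zero₁ (v w : SplitOct) : triple 0 v w = 0 := by
  rw [triple, cross_zero_left, polar_zero_left]

lemma triple_zero₂ (u w : SplitOct) : triple u 0 w = 0 := by
  rw [triple, cross_zero_right, polar_zero_left]

lemma triple_zero₃ (u v : SplitOct) : triple u v 0 = 0 :=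
  polar_zero_right _

/-- The orthogonal complement of `P` inside the imaginary split octonions. -/
def orth (P : Submodule ℝ SplitOct) : Submodule ℝ SplitOct where
  carrier := {x | x ∈ Im ∧ ∀ y ∈ P, polar x y = 0}
  add_mem' := by
    rintro a b ⟨ha1, ha2⟩ ⟨hb1, hb2⟩
    exact ⟨Im.add_mem ha1 hb1, fun y hy => by
      rw [polar_add_left, ha2 y hy, hb2 y hy, add_zero]⟩
  zero_mem' := ⟨Im.zero_mem, fun y _ => polar_zero_left y⟩
  smul_mem' := by
    rintro r a ⟨ha1, ha2⟩
    exact ⟨Im.smul_mem r ha1, fun y hy => by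
      rw [polar_smul_left, ha2 y hy, mul_zero]⟩

/-- The annihilator `Ann x = {v ∈ Im 𝕆' | x × v = 0}`. -/
def Ann (x : SplitOct) : Submodule ℝ SplitOct where
  carrier := {v | v ∈ Im ∧ cross x v = 0}
  add_mem' := by
    rintro a b ⟨ha1, ha2⟩ ⟨hb1, hb2⟩
    exact ⟨Im.add_mem ha1 hb1, by rw [cross_add_right, ha2, hb2, add_zero]⟩
  zero_mem' := ⟨Im.zero_mem, cross_zero_right x⟩
  smul_mem' := by
    rintro r a ⟨ha1, ha2⟩
    exact ⟨Im.smul_mem r ha1, by rw [cross_smul_right, ha2, smul_zero]⟩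

/-- An isotropic line of `Im 𝕆'`. -/
def IsIsotropicLine (ℓ : Submodule ℝ SplitOct) : Prop :=
  ∃ x, x ∈ Im ∧ x ≠ 0 ∧ q x = 0 ∧ ℓ = Submodule.span ℝ {x}

/-- An annihilator photon: a 2-dimensional totally isotropic subspace of `Im 𝕆'`
on which the cross product vanishes identically. -/
def IsAnnihilatorPhoton (ω : Submodule ℝ SplitOct) : Prop :=
  ω ≤ Im ∧ Module.finrank ℝ ω = 2 ∧ (∀ x ∈ ω, q x = 0) ∧
    ∀ x ∈ ω, ∀ y ∈ ω, cross x y = 0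


/-- The imaginary unit `𝐢 = (i, 0)`. -/
def oi : SplitOct := ((⟨0, 1, 0, 0⟩ : ℍ[ℝ]), 0)

/-- The imaginary unit `𝐣 = (j, 0)`. -/
def oj : SplitOct := ((⟨0, 0, 1, 0⟩ : ℍ[ℝ]), 0)

/-- The imaginary unit `𝐤 = (k, 0)`. -/
def ok : SplitOct := ((⟨0, 0, 0, 1⟩ : ℍ[ℝ]), 0)

/-- The split unit `𝐥 = (0, 1)`. -/
def ol : SplitOct := (0, 1)

/-- `𝐥𝐢 = 𝐥·𝐢`. -/
def oli : SplitOct := mul ol oi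

/-- `𝐥𝐣 = 𝐥·𝐣`. -/
def olj : SplitOct := mul ol oj

/-- `𝐥𝐤 = 𝐥·𝐤`. -/
def olk : SplitOct := mul ol ok

/-- `L = ℝ𝐢`. -/
def Lline : Submodule ℝ SplitOct := Submodule.span ℝ {oi}

/-- `T = span{𝐥, 𝐥𝐢}`. -/
def Tplane : Submodule ℝ SplitOct := Submodule.span ℝ {ol, oli}

/-- `N = span{𝐣, 𝐤}`. -/
def Nplane : Submodule ℝ SplitOct := Submodule.span ℝ {oj, ok}

/-- `B = span{𝐥𝐣, 𝐥𝐤}`. -/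
def Bplane : Submodule ℝ SplitOct := Submodule.span ℝ {olj, olk}

/-- `P = L ⊕ N = span{𝐢, 𝐣, 𝐤}`. -/
def Pplane : Submodule ℝ SplitOct := Submodule.span ℝ {oi, oj, ok}

lemma oi_mem_P : oi ∈ Pplane := Submodule.subset_span (by simp)

lemma N_le_P : Nplane ≤ Pplane := by
  refine Submodule.span_le.mpr ?_
  rintro x hx
  simp only [Set.mem_insert_iff, Set.mem_singleton_iff] at hx
  rcases hx with rfl | rfl
  · exact Submodule.subset_span (by simp)
  · exact Submodule.subset_span (by simp)

/-- The pencil `𝒫₀` of linear maps `φ : P → Im 𝕆'` with `φ 𝐢 = 0`, `φ N ⊆ T`, and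
`φ (𝐢×n) = 𝐢×(φ n)` for all `n ∈ N`. -/
def Pzero : Set (Pplane →ₗ[ℝ] SplitOct) :=
  {φ | (∀ x, φ x ∈ Im) ∧
    φ ⟨oi, oi_mem_P⟩ = 0 ∧
    (∀ n, ∀ hn : n ∈ Nplane, φ ⟨n, N_le_P hn⟩ ∈ Tplane) ∧
    ∀ n, ∀ hn : n ∈ Nplane, ∀ hmem : cross oi n ∈ Pplane,
      φ ⟨cross oi n, hmem⟩ = cross oi (φ ⟨n, N_le_P hn⟩)}

/-- The subspace `R(u,v) = {z ∈ P⊥ : ⟨φ u, z⟩ + ⟨φ v, (uv)z⟩ = 0 for all φ ∈ 𝒫₀}`. -/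
def Rsub (u v : SplitOct) (hu : u ∈ Pplane) (hv : v ∈ Pplane) : Submodule ℝ SplitOct where
  carrier := {z | z ∈ orth Pplane ∧
    ∀ φ ∈ Pzero, polar (φ ⟨u, hu⟩) z + polar (φ ⟨v, hv⟩) (mul (mul u v) z) = 0}
  add_mem' := by
    rintro a b ⟨ha1, ha2⟩ ⟨hb1, hb2⟩
    refine ⟨(orth Pplane).add_mem ha1 hb1, fun φ hφ => ?_⟩
    rw [mul_add_right, polar_add_right, polar_add_right]
    have h1 := ha2 φ hφ
    have h2 := hb2 φ hφ
    linarith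
  zero_mem' := by
    refine ⟨(orth Pplane).zero_mem, fun φ hφ => ?_⟩
    rw [mul_zero_right, polar_zero_right, polar_zero_right, add_zero]
  smul_mem' := by
    rintro r a ⟨ha1, ha2⟩
    refine ⟨(orth Pplane).smul_mem r ha1, fun φ hφ => ?_⟩
    rw [mul_smul_right, polar_smul_right, polar_smul_right, ← mul_add, ha2 φ hφ, mul_zero]

/-!
In coordinates, `P⊥ = {(0, w) : w ∈ ℍ}` and `𝒫₀` is the two-parameter family
`x₁𝐢 + x₂𝐣 + x₃𝐤 ↦ (0, (s + t i)(x₂ + x₃ i))`, so `R(u,v)` is cut out of `P⊥` by two real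
linear equations: the `1`- and `i`-components of `κ w̄` vanish, for an explicit quaternion
`κ = κ(u,v)`. The `T`-part `(w₀, w₁)` of `w` enters these equations through a
rotation-scaling matrix with entries `κ₀, κ₁`. For orthonormal `u, v` one has
`κ₀² + κ₁² = u₂² + u₃² + (u₃v₂ − u₂v₃)²(3 − v₁²)`, which is positive exactly when `u ∉ L`;
then every `B`-part `(w₂, w₃)` has exactly one completion in `R(u,v)`. If `u ∈ L` then
`κ₀ = κ₁ = 0` and `κ₂² + κ₃² = 1`, so the equations say precisely that the `B`-part vanishes,
i.e. `R(u,v) = T`.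
-/

/-- `⟨a, b, c, d⟩ : ℍ[ℝ]`, kept folded because the anonymous constructor elaborates at the
underlying `QuaternionAlgebra` type, where the `ℍ[ℝ]` simp lemmas do not apply. -/
def quat (a b c d : ℝ) : ℍ[ℝ] := ⟨a, b, c, d⟩

@[simp] lemma mk_eq_quat (a b c d : ℝ) :
    (⟨a, b, c, d⟩ : QuaternionAlgebra ℝ (-1) 0 (-1)) = quat a b c d := rfl

@[simp] lemma quat_re (a b c d : ℝ) : (quat a b c d).re = a := rfl
@[simp] lemma quat_imI (a b c d : ℝ) : (quat a b c d).imI = b := rfl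
@[simp] lemma quat_imJ (a b c d : ℝ) : (quat a b c d).imJ = c := rfl
@[simp] lemma quat_imK (a b c d : ℝ) : (quat a b c d).imK = d := rfl

def pVec (a b c : ℝ) : SplitOct := (quat 0 a b c, 0)

lemma mem_Im_iff_re_eq_zero {x : SplitOct} : x ∈ Im ↔ x.1.re = 0 := by
  rw [mem_Im_iff, conj, Prod.ext_iff]
  simp [Quaternion.star_eq_neg]

lemma forall_mem_span_polar_eq_zero_iff (x : SplitOct) (s : Set SplitOct) :
    (∀ y ∈ Submodule.span ℝ s, polar x y = 0) ↔ ∀ y ∈ s, polar x y = 0 := by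
  refine ⟨fun h y hy => h y (Submodule.subset_span hy), fun h y hy => ?_⟩
  induction hy using Submodule.span_induction with
  | mem y hy => exact h y hy
  | zero => exact polar_zero_right x
  | add y y' _ _ hy hy' => rw [polar_add_right, hy, hy', add_zero]
  | smul r y _ hy => rw [polar_smul_right, hy, mul_zero]

lemma oli_eq : oli = (0, quat 0 (-1) 0 0) := by
  ext <;> simp [oli, mul, ol, oi]

lemma olj_eq : olj = (0, quat 0 0 (-1) 0) := by
  ext <;> simp [olj, mul, ol, oj]

lemma olk_eq : olk = (0, quat 0 0 0 (-1)) := by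
  ext <;> simp [olk, mul, ol, ok]

lemma mem_Pplane_iff {x : SplitOct} : x ∈ Pplane ↔ ∃ a b c : ℝ, x = pVec a b c := by
  simp only [Pplane, Submodule.mem_span_triple]
  refine exists₃_congr fun a b c => ?_
  rw [eq_comm]
  refine Eq.congr_right ?_
  ext <;> simp [pVec, oi, oj, ok]

lemma mem_Nplane_iff {x : SplitOct} : x ∈ Nplane ↔ ∃ b c : ℝ, x = pVec 0 b c := by
  simp only [Nplane, Submodule.mem_span_pair]
  refine exists₂_congr fun b c => ?_
  rw [eq_comm]
  refine Eq.congr_right ?_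
  ext <;> simp [pVec, oj, ok]

lemma pVec_mem_Lline_iff {a b c : ℝ} : pVec a b c ∈ Lline ↔ b = 0 ∧ c = 0 := by
  simp only [Lline, Submodule.mem_span_singleton, pVec, oi, Prod.ext_iff]
  simp [Quaternion.ext_iff, eq_comm]

lemma mem_Tplane_iff {x : SplitOct} : x ∈ Tplane ↔ ∃ a b : ℝ, x = (0, quat a b 0 0) := by
  simp only [Tplane, Submodule.mem_span_pair, oli_eq]
  constructor
  · rintro ⟨a, b, rfl⟩
    exact ⟨a, -b, by ext <;> simp [ol]⟩
  · rintro ⟨a, b, rfl⟩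
    exact ⟨a, -b, by ext <;> simp [ol]⟩

lemma mem_Bplane_iff {x : SplitOct} : x ∈ Bplane ↔ ∃ c d : ℝ, x = (0, quat 0 0 c d) := by
  simp only [Bplane, Submodule.mem_span_pair, olj_eq, olk_eq]
  constructor
  · rintro ⟨c, d, rfl⟩
    exact ⟨-c, -d, by ext <;> simp⟩
  · rintro ⟨c, d, rfl⟩
    exact ⟨-c, -d, by ext <;> simp⟩

lemma mem_orth_Pplane_iff {z : SplitOct} : z ∈ orth Pplane ↔ ∃ w : ℍ[ℝ], z = (0, w) := by
  simp only [orth, Pplane, Submodule.mem_mk, AddSubmonoid.mem_mk, AddSubsemigroup.mem_mk,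
    Set.mem_ofPred_eq, forall_mem_span_polar_eq_zero_iff, mem_Im_iff_re_eq_zero]
  simp only [polar_apply, oi, oj, ok, mk_eq_quat, Set.mem_insert_iff, Set.mem_singleton_iff,
    forall_eq_or_imp, forall_eq, Quaternion.re_mul, Quaternion.re_star, Quaternion.imI_star,
    Quaternion.imJ_star, Quaternion.imK_star, Quaternion.re_zero, Quaternion.imI_zero,
    Quaternion.imJ_zero, Quaternion.imK_zero, quat_re, quat_imI, quat_imJ, quat_imK]
  norm_num
  refine ⟨fun h => ⟨z.2, Prod.ext (QuaternionAlgebra.ext h.1 h.2.1 h.2.2.1 h.2.2.2) rfl⟩, ?_⟩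
  rintro ⟨w, rfl⟩
  simp

lemma mk_zero_mem_orth_Bplane_iff {w : ℍ[ℝ]} :
    ((0, w) : SplitOct) ∈ orth Bplane ↔ w.imJ = 0 ∧ w.imK = 0 := by
  simp only [orth, Bplane, Submodule.mem_mk, AddSubmonoid.mem_mk, AddSubsemigroup.mem_mk,
    Set.mem_ofPred_eq, forall_mem_span_polar_eq_zero_iff, mem_Im_iff_re_eq_zero]
  simp [polar_apply, olj_eq, olk_eq]

/-- `x₁𝐢 + x₂𝐣 + x₃𝐤 ↦ (0, (s + t i)(x₂ + x₃ i))`. -/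
def pencil (s t : ℝ) : Pplane →ₗ[ℝ] SplitOct where
  toFun x := (0, quat (s * x.1.1.imJ - t * x.1.1.imK) (t * x.1.1.imJ + s * x.1.1.imK) 0 0)
  map_add' x y := by ext <;> simp <;> ring
  map_smul' r x := by ext <;> simp <;> ring

lemma pencil_apply_pVec (s t a b c : ℝ) (h : pVec a b c ∈ Pplane) :
    pencil s t ⟨pVec a b c, h⟩ = (0, quat (s * b - t * c) (t * b + s * c) 0 0) := rfl

lemma cross_oi_pVec (a b c : ℝ) : cross oi (pVec a b c) = pVec 0 (-c) b := by
  ext <;> simp [cross, mul, conj, oi, pVec] <;> ring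

lemma cross_oi_mk_zero (w : ℍ[ℝ]) :
    cross oi (0, w) = (0, quat (-w.imI) w.re w.imK (-w.imJ)) := by
  ext <;> simp [cross, mul, conj, oi] <;> ring

lemma pencil_mem_Pzero (s t : ℝ) : pencil s t ∈ Pzero := by
  refine ⟨fun x => mem_Im_iff_re_eq_zero.mpr rfl, ?_, fun n hn => ?_, fun n hn hmem => ?_⟩
  · ext <;> simp [pencil, oi]
  · exact mem_Tplane_iff.mpr ⟨_, _, rfl⟩
  · obtain ⟨b, c, rfl⟩ := mem_Nplane_iff.mp hn
    simp only [cross_oi_pVec, pencil_apply_pVec, cross_oi_mk_zero]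
    ext <;> simp <;> ring

lemma eq_pencil_of_mem_Pzero {φ : Pplane →ₗ[ℝ] SplitOct} (hφ : φ ∈ Pzero) :
    ∃ s t, φ = pencil s t := by
  obtain ⟨-, hi, hT, hcross⟩ := hφ
  have hj : oj ∈ Nplane := Submodule.subset_span (by simp)
  obtain ⟨s, t, hφj⟩ := mem_Tplane_iff.mp (hT oj hj)
  have hok : cross oi oj = ok := (cross_oi_pVec 0 1 0).trans (by ext <;> simp [ok, pVec])
  have hφk : φ ⟨ok, Submodule.subset_span (by simp)⟩ = (0, quat (-t) s 0 0) := by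
    have := hcross oj hj (hok ▸ Submodule.subset_span (by simp))
    simp only [hok, hφj] at this
    rw [this, cross_oi_mk_zero]
    ext <;> simp
  refine ⟨s, t, LinearMap.ext_on Submodule.span_span_coe_preimage fun x hx => ?_⟩
  obtain ⟨x, hxP⟩ := x
  rcases hx with rfl | rfl | rfl
  · rw [hi]; ext <;> simp [pencil, oi]
  · rw [hφj]; ext <;> simp [pencil, oj]
  · rw [hφk]; ext <;> simp [pencil, ok]

/-- For `u = u₁𝐢 + u₂𝐣 + u₃𝐤`, `v = v₁𝐢 + v₂𝐣 + v₃𝐤` and `z = (0, w)`, expanding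
`⟨φ u, z⟩ + ⟨φ v, (uv)z⟩` over `φ ∈ 𝒫₀` yields the `1`- and `i`-components of `κ w̄`,
with `κ` this quaternion. -/
def rCoeff (u1 u2 u3 v1 v2 v3 : ℝ) : ℍ[ℝ] :=
  quat (2*u3*v2*v3 - u2 - u2*v3^2 + u2*v2^2 + u1*v1*v2)
    (-u3 + u3*v3^2 - u3*v2^2 + 2*u2*v2*v3 + u1*v1*v3)
    (u3*v1*v2 + u2*v1*v3 - 2*u1*v2*v3)
    (u3*v1*v3 - u2*v1*v2 - u1*v3^2 + u1*v2^2)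

lemma Rsub_condition_pencil_eq (s t u1 u2 u3 v1 v2 v3 : ℝ) (hu : pVec u1 u2 u3 ∈ Pplane)
    (hv : pVec v1 v2 v3 ∈ Pplane) (w : ℍ[ℝ]) :
    polar (pencil s t ⟨pVec u1 u2 u3, hu⟩) (0, w)
        + polar (pencil s t ⟨pVec v1 v2 v3, hv⟩)
          (mul (mul (pVec u1 u2 u3) (pVec v1 v2 v3)) (0, w)) =
      s * (rCoeff u1 u2 u3 v1 v2 v3 * star w).re
        - t * (rCoeff u1 u2 u3 v1 v2 v3 * star w).imI := by
  rw [pencil_apply_pVec, pencil_apply_pVec]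
  simp [polar_apply, mul, pVec, rCoeff, Quaternion.re_mul,
    Quaternion.imI_mul, Quaternion.imJ_mul, Quaternion.imK_mul]
  ring

lemma mem_Rsub_pVec_iff {u1 u2 u3 v1 v2 v3 : ℝ} (hu : pVec u1 u2 u3 ∈ Pplane)
    (hv : pVec v1 v2 v3 ∈ Pplane) {z : SplitOct} :
    z ∈ Rsub (pVec u1 u2 u3) (pVec v1 v2 v3) hu hv ↔ ∃ w : ℍ[ℝ], z = (0, w) ∧
      (rCoeff u1 u2 u3 v1 v2 v3 * star w).re = 0 ∧
      (rCoeff u1 u2 u3 v1 v2 v3 * star w).imI = 0 := by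
  change (z ∈ orth Pplane ∧ ∀ φ ∈ Pzero, _) ↔ _
  rw [mem_orth_Pplane_iff]
  constructor
  · rintro ⟨⟨w, rfl⟩, h⟩
    refine ⟨w, rfl, ?_, ?_⟩
    · have h10 := h _ (pencil_mem_Pzero 1 0)
      rw [Rsub_condition_pencil_eq] at h10
      linarith
    · have h01 := h _ (pencil_mem_Pzero 0 1)
      rw [Rsub_condition_pencil_eq] at h01
      linarith
  · rintro ⟨w, rfl, hre, himI⟩
    refine ⟨⟨w, rfl⟩, fun φ hφ => ?_⟩
    obtain ⟨s, t, rfl⟩ := eq_pencil_of_mem_Pzero hφ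
    rw [Rsub_condition_pencil_eq, hre, himI]
    ring

lemma q_pVec (a b c : ℝ) : q (pVec a b c) = a ^ 2 + b ^ 2 + c ^ 2 := by
  simp [q_apply, pVec, Quaternion.normSq_def']

lemma polar_pVec (a b c a' b' c' : ℝ) :
    polar (pVec a b c) (pVec a' b' c') = a * a' + b * b' + c * c' := by
  simp [polar_apply, pVec, Quaternion.re_mul]

lemma rCoeff_re_sq_add_imI_sq_pos {u1 u2 u3 v1 v2 v3 : ℝ} (hv : v1 ^ 2 + v2 ^ 2 + v3 ^ 2 = 1) (huv : u1 * v1 + u2 * v2 + u3 * v3 = 0)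
    (hN : 0 < u2 ^ 2 + u3 ^ 2) :
    0 < (rCoeff u1 u2 u3 v1 v2 v3).re ^ 2 + (rCoeff u1 u2 u3 v1 v2 v3).imI ^ 2 := by
  have key : (rCoeff u1 u2 u3 v1 v2 v3).re ^ 2 + (rCoeff u1 u2 u3 v1 v2 v3).imI ^ 2
      = (u2 ^ 2 + u3 ^ 2) + (u3 * v2 - u2 * v3) ^ 2 * (3 - v1 ^ 2) := by
    simp only [rCoeff, quat_re, quat_imI]
    linear_combination (u3*v3*(v3^2+v2^2-2) + u2*v2*(v2^2+v3^2-2) + u1*v1*(v3^2+v2^2)) * huv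
      + (u3*v2-u2*v3)^2 * hv
  have hv1 : v1 ^ 2 ≤ 1 := by nlinarith [sq_nonneg v2, sq_nonneg v3]
  rw [key]
  nlinarith [sq_nonneg (u3 * v2 - u2 * v3)]

lemma rCoeff_of_N_part_eq_zero {u1 v1 v2 v3 : ℝ} (hu : u1 ^ 2 = 1) (hv : v1 ^ 2 + v2 ^ 2 + v3 ^ 2 = 1)
    (huv : u1 * v1 = 0) :
    (rCoeff u1 0 0 v1 v2 v3).re = 0 ∧ (rCoeff u1 0 0 v1 v2 v3).imI = 0 ∧
      (rCoeff u1 0 0 v1 v2 v3).imJ ^ 2 + (rCoeff u1 0 0 v1 v2 v3).imK ^ 2 = 1 := by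
  have hv1 : v1 = 0 := by
    rcases mul_eq_zero.mp huv with h | h
    · simp [h] at hu
    · exact h
  subst hv1
  refine ⟨by simp [rCoeff], by simp [rCoeff], ?_⟩
  simp only [rCoeff, quat_imJ, quat_imK]
  linear_combination (v2 ^ 2 + v3 ^ 2 + 1) * u1 ^ 2 * hv + hu

lemma existsUnique_of_re_sq_add_imI_sq_ne_zero {κ : ℍ[ℝ]} (hκ : κ.re ^ 2 + κ.imI ^ 2 ≠ 0)
    (c d : ℝ) :
    ∃! w : ℍ[ℝ], w.imJ = c ∧ w.imK = d ∧ (κ * star w).re = 0 ∧ (κ * star w).imI = 0 := by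
  simp only [Quaternion.re_mul, Quaternion.imI_mul, Quaternion.re_star, Quaternion.imI_star,
    Quaternion.imJ_star, Quaternion.imK_star]
  set S := -(κ.imJ * c + κ.imK * d)
  set T := κ.imK * c - κ.imJ * d
  refine ⟨quat ((κ.re * S - κ.imI * T) / (κ.re ^ 2 + κ.imI ^ 2))
    ((κ.imI * S + κ.re * T) / (κ.re ^ 2 + κ.imI ^ 2)) c d, ⟨rfl, rfl, ?_, ?_⟩, ?_⟩
  · simp only [quat_re, quat_imI, quat_imJ, quat_imK]
    field_simp
    ring
  · simp only [quat_re, quat_imI, quat_imJ, quat_imK]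
    field_simp
    ring
  · rintro w ⟨rfl, rfl, hre, himI⟩
    ext
    · simp only [quat_re]
      rw [eq_div_iff hκ]
      linear_combination κ.re * hre + κ.imI * himI
    · simp only [quat_imI]
      rw [eq_div_iff hκ]
      linear_combination κ.imI * hre - κ.re * himI
    · rfl
    · rfl

lemma re_mul_star_eq_zero_and_imI_mul_star_eq_zero_iff {κ : ℍ[ℝ]} (hre : κ.re = 0) (himI : κ.imI = 0)
    (hκ : κ.imJ ^ 2 + κ.imK ^ 2 ≠ 0) (w : ℍ[ℝ]) :
    (κ * star w).re = 0 ∧ (κ * star w).imI = 0 ↔ w.imJ = 0 ∧ w.imK = 0 := by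
  simp only [Quaternion.re_mul, Quaternion.imI_mul, Quaternion.re_star, Quaternion.imI_star,
    Quaternion.imJ_star, Quaternion.imK_star, hre, himI]
  constructor
  · rintro ⟨h1, h2⟩
    refine ⟨mul_left_cancel₀ hκ ?_, mul_left_cancel₀ hκ ?_⟩
    · linear_combination κ.imJ * h1 + κ.imK * h2
    · linear_combination κ.imK * h1 - κ.imJ * h2
  · rintro ⟨h1, h2⟩
    simp [h1, h2]

lemma existsUnique_mem_Rsub_sub_mem_orth_Bplane {u v : SplitOct} (hu : u ∈ Pplane) (hv : v ∈ Pplane)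
    (hqv : q v = 1) (huv : polar u v = 0) (hL : u ∉ Lline) :
    ∀ b ∈ Bplane, ∃! z, z ∈ Rsub u v hu hv ∧ z - b ∈ orth Bplane := by
  obtain ⟨u1, u2, u3, rfl⟩ := mem_Pplane_iff.mp hu
  obtain ⟨v1, v2, v3, rfl⟩ := mem_Pplane_iff.mp hv
  rw [q_pVec] at hqv
  rw [polar_pVec] at huv
  have hN : 0 < u2 ^ 2 + u3 ^ 2 := by
    rcases not_and_or.mp (pVec_mem_Lline_iff.not.mp hL) with h | h <;> positivity
  intro b hb
  obtain ⟨c, d, rfl⟩ := mem_Bplane_iff.mp hb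
  obtain ⟨w, ⟨hc, hd, hre, himI⟩, huniq⟩ := existsUnique_of_re_sq_add_imI_sq_ne_zero
    (rCoeff_re_sq_add_imI_sq_pos hqv huv hN).ne' c d
  refine ⟨(0, w), ⟨(mem_Rsub_pVec_iff hu hv).mpr ⟨w, rfl, hre, himI⟩, ?_⟩, ?_⟩
  · rw [Prod.mk_sub_mk, sub_zero, mk_zero_mem_orth_Bplane_iff]
    simp [hc, hd]
  · rintro z ⟨hz, hzb⟩
    obtain ⟨w', rfl, hre', himI'⟩ := (mem_Rsub_pVec_iff hu hv).mp hz
    rw [Prod.mk_sub_mk, sub_zero, mk_zero_mem_orth_Bplane_iff] at hzb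
    simp only [Quaternion.imJ_sub, Quaternion.imK_sub, quat_imJ, quat_imK, sub_eq_zero] at hzb
    rw [huniq w' ⟨hzb.1, hzb.2, hre', himI'⟩]

lemma Rsub_eq_Tplane_of_mem_Lline {u v : SplitOct} (hu : u ∈ Pplane) (hv : v ∈ Pplane)
    (hqu : q u = 1) (hqv : q v = 1) (huv : polar u v = 0) (hL : u ∈ Lline) :
    Rsub u v hu hv = Tplane := by
  obtain ⟨u1, u2, u3, rfl⟩ := mem_Pplane_iff.mp hu
  obtain ⟨v1, v2, v3, rfl⟩ := mem_Pplane_iff.mp hv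
  obtain ⟨rfl, rfl⟩ := pVec_mem_Lline_iff.mp hL
  rw [q_pVec] at hqu hqv
  rw [polar_pVec] at huv
  obtain ⟨hre, himI, hκ⟩ := rCoeff_of_N_part_eq_zero (by linarith) hqv (by linarith)
  ext z
  rw [mem_Rsub_pVec_iff, mem_Tplane_iff]
  simp only [re_mul_star_eq_zero_and_imI_mul_star_eq_zero_iff hre himI (by rw [hκ]; exact one_ne_zero)]
  constructor
  · rintro ⟨w, rfl, hJ, hK⟩
    exact ⟨w.re, w.imI, by ext <;> simp [hJ, hK]⟩
  · rintro ⟨a, b, rfl⟩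
    exact ⟨_, rfl, rfl, rfl⟩

theorem projection_R_general_general
    (W : Submodule ℝ SplitOct) (hWP : W ≤ Pplane)
    (u' v' : SplitOct) (hu'W : u' ∈ W) (hv'W : v' ∈ W)
    (hqu' : q u' = 1) (hqv' : q v' = 1) (huv' : polar u' v' = 0) :
    (u' ∉ Lline →
      ∀ b ∈ Bplane, ∃! z, z ∈ Rsub u' v' (hWP hu'W) (hWP hv'W) ∧ z - b ∈ orth Bplane) ∧
    (u' ∈ Lline → Rsub u' v' (hWP hu'W) (hWP hv'W) = Tplane) :=
  ⟨existsUnique_mem_Rsub_sub_mem_orth_Bplane _ _ hqv' huv',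
    Rsub_eq_Tplane_of_mem_Lline _ _ hqu' hqv' huv'⟩

/-- For a `q`-orthonormal basis `(u',v')` of a 2-plane `W ⊆ P`: if
`u' ∉ L` then `π_B` restricted to `R(u',v')` is a linear isomorphism onto `B`, while if
`u' ∈ L` then `R(u',v') = T`. -/
theorem projection_R_general
    (W : Submodule ℝ SplitOct) (hWP : W ≤ Pplane)
    (hWdim : Module.finrank ℝ W = 2)
    (u' v' : SplitOct) (hu'W : u' ∈ W) (hv'W : v' ∈ W)
    (hqu' : q u' = 1) (hqv' : q v' = 1) (huv' : polar u' v' = 0)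
    (hbasis : Submodule.span ℝ {u', v'} = W) :
    (u' ∉ Lline →
      ∀ b ∈ Bplane, ∃! z, z ∈ Rsub u' v' (hWP hu'W) (hWP hv'W) ∧ z - b ∈ orth Bplane) ∧
    (u' ∈ Lline → Rsub u' v' (hWP hu'W) (hWP hv'W) = Tplane) :=
  projection_R_general_general W hWP u' v' hu'W hv'W hqu' hqv' huv'

end SplitOct
end
end

section
/- Let x₀ ∈ ℝ and z, z₂ ∈ ℂ satisfy x₀² + 2|z₂|² = 1 and |z|² = 1/2, and set λ := √(2x₀² + |z₂|²). Then for all α₀, δ₀ ∈ ℂ with |α₀| ≤ √2 and |δ₀| < 1, one has 4x₀² + 4λ²|z₂|² + 4|z₂|² + 8λ²x₀² − 8·Re(z₂²·conj(z)²) − 2√2·x₀·(2λ² − 1)·Re(i·α₀·z₂) + 4·Re(δ₀·(−2x₀²·conj(z)² + λ²·conj(z₂)²)) > 0. -/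
/-!
With `s = x₀²`, `a = |z₂|²` and `λ² = 2s + a`, the constraint `s + 2a = 1` turns the coefficient
`2λ² - 1` into `3s`. The `z₂² z̄²` term costs at most `4a`, and since `|δ₀| < 1` the `δ₀` term
costs strictly less than `4(s + λ²a) > 0`, which is the rest of the positive terms `4s + 4λ²a`. The `α₀` term is at most `12 s |x₀| |z₂|`, which `8λ²s` dominates by the
positive definite quadratic form `4u² - 3uv + 2v² ≥ 0`.
-/

open Complex

lemma three_mul_mul_le_four_sq_add_two_sq (u v : ℝ) : 3 * (u * v) ≤ 4 * u ^ 2 + 2 * v ^ 2 := by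
  nlinarith [sq_nonneg (8 * u - 3 * v), sq_nonneg v]

lemma abs_re_I_mul_mul_le (α w : ℂ) : |(I * α * w).re| ≤ ‖α‖ * ‖w‖ := by
  simpa only [norm_mul, norm_I, one_mul] using abs_re_le_norm (I * α * w)

lemma neg_lt_re_mul_of_norm_lt_one {δ w : ℂ} {M : ℝ} (hδ : ‖δ‖ < 1) (hw : ‖w‖ ≤ M)
    (hM : 0 < M) : -M < (δ * w).re := by
  have hδw : ‖δ * w‖ < M := by
    rw [norm_mul]
    rcases (norm_nonneg w).eq_or_lt with hw0 | hw0
    · rw [← hw0, mul_zero]; exact hM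
    · nlinarith
  linarith [neg_abs_le (δ * w).re, abs_re_le_norm (δ * w)]

lemma two_sqrt_two_mul_mul_three_sq_mul_le (x v r : ℝ) (hr : |r| ≤ √2 * v) :
    2 * √2 * x * (3 * x ^ 2) * r ≤ 8 * (2 * x ^ 2 + v ^ 2) * x ^ 2 := by
  have hsqrt2 : √2 * √2 = 2 := Real.mul_self_sqrt zero_le_two
  have hxr : √2 * x * r ≤ 2 * (|x| * v) :=
    calc √2 * x * r ≤ |√2 * x * r| := le_abs_self _
      _ = √2 * |x| * |r| := by rw [abs_mul, abs_mul, abs_of_nonneg (Real.sqrt_nonneg 2)]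
      _ ≤ √2 * |x| * (√2 * v) := by gcongr
      _ = 2 * (|x| * v) := by linear_combination |x| * v * hsqrt2
  have hquad := three_mul_mul_le_four_sq_add_two_sq |x| v
  rw [sq_abs] at hquad
  calc 2 * √2 * x * (3 * x ^ 2) * r = 6 * x ^ 2 * (√2 * x * r) := by ring
    _ ≤ 6 * x ^ 2 * (2 * (|x| * v)) := by gcongr
    _ ≤ 8 * (2 * x ^ 2 + v ^ 2) * x ^ 2 := by nlinarith [sq_nonneg x]

lemma norm_neg_two_mul_conj_sq_add_le (x L : ℝ) (hL : 0 ≤ L) (z w : ℂ) :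
    ‖-2 * (x : ℂ) ^ 2 * (starRingEnd ℂ z) ^ 2 + (L : ℂ) * (starRingEnd ℂ w) ^ 2‖
      ≤ 2 * x ^ 2 * ‖z‖ ^ 2 + L * ‖w‖ ^ 2 := by
  have hx : ‖-2 * (x : ℂ) ^ 2‖ = 2 * x ^ 2 := by
    rw [norm_mul, norm_neg, norm_pow, norm_real, Real.norm_eq_abs, sq_abs]; norm_num
  calc _ ≤ ‖-2 * (x : ℂ) ^ 2 * (starRingEnd ℂ z) ^ 2‖ + ‖(L : ℂ) * (starRingEnd ℂ w) ^ 2‖ :=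
        norm_add_le _ _
    _ = 2 * x ^ 2 * ‖z‖ ^ 2 + L * ‖w‖ ^ 2 := by
        rw [norm_mul (-2 * (x : ℂ) ^ 2), hx, norm_mul (L : ℂ), norm_pow, norm_pow, norm_conj, norm_conj, norm_real,
          Real.norm_eq_abs, abs_of_nonneg hL]

/-- The key transversality inequality for the developing map of the
`(G₂', Ein^{2,3})`-structures associated to stable β-cyclic Higgs bundles. -/
theorem ein_transversality
    (x₀ : ℝ) (z z₂ : ℂ)
    (hnorm : x₀ ^ 2 + 2 * ‖z₂‖ ^ 2 = 1)
    (hz : ‖z‖ ^ 2 = 1 / 2)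
    (α₀ δ₀ : ℂ)
    (hα : ‖α₀‖ ≤ Real.sqrt 2) (hδ : ‖δ₀‖ < 1) :
    0 < 4 * x₀ ^ 2
        + 4 * Real.sqrt (2 * x₀ ^ 2 + ‖z₂‖ ^ 2) ^ 2 * ‖z₂‖ ^ 2
        + 4 * ‖z₂‖ ^ 2
        + 8 * Real.sqrt (2 * x₀ ^ 2 + ‖z₂‖ ^ 2) ^ 2 * x₀ ^ 2
        - 8 * (z₂ ^ 2 * (starRingEnd ℂ z) ^ 2).re
        - 2 * Real.sqrt 2 * x₀ * (2 * Real.sqrt (2 * x₀ ^ 2 + ‖z₂‖ ^ 2) ^ 2 - 1)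
            * (Complex.I * α₀ * z₂).re
        + 4 * (δ₀ * (-2 * (x₀ : ℂ) ^ 2 * (starRingEnd ℂ z) ^ 2
            + (Real.sqrt (2 * x₀ ^ 2 + ‖z₂‖ ^ 2) : ℂ) ^ 2
              * (starRingEnd ℂ z₂) ^ 2)).re := by
  have hL : √(2 * x₀ ^ 2 + ‖z₂‖ ^ 2) ^ 2 = 2 * x₀ ^ 2 + ‖z₂‖ ^ 2 := Real.sq_sqrt (by positivity)
  have hLC : (√(2 * x₀ ^ 2 + ‖z₂‖ ^ 2) : ℂ) ^ 2 = ((2 * x₀ ^ 2 + ‖z₂‖ ^ 2 : ℝ) : ℂ) := by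
    rw [← ofReal_pow, hL]
  have hcoef : 2 * (2 * x₀ ^ 2 + ‖z₂‖ ^ 2) - 1 = 3 * x₀ ^ 2 := by linarith
  rw [hL, hLC, hcoef]
  have hzz : (z₂ ^ 2 * (starRingEnd ℂ z) ^ 2).re ≤ ‖z₂‖ ^ 2 / 2 := by
    have h := re_le_norm (z₂ ^ 2 * (starRingEnd ℂ z) ^ 2)
    rwa [norm_mul, norm_pow, norm_pow, norm_conj, hz, mul_one_div] at h
  have hα₀ : 2 * √2 * x₀ * (3 * x₀ ^ 2) * (I * α₀ * z₂).re
      ≤ 8 * (2 * x₀ ^ 2 + ‖z₂‖ ^ 2) * x₀ ^ 2 :=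
    two_sqrt_two_mul_mul_three_sq_mul_le _ _ _ <|
      (abs_re_I_mul_mul_le α₀ z₂).trans (mul_le_mul_of_nonneg_right hα (norm_nonneg z₂))
  have hδ₀ : -(x₀ ^ 2 + (2 * x₀ ^ 2 + ‖z₂‖ ^ 2) * ‖z₂‖ ^ 2)
      < (δ₀ * (-2 * (x₀ : ℂ) ^ 2 * (starRingEnd ℂ z) ^ 2
        + ((2 * x₀ ^ 2 + ‖z₂‖ ^ 2 : ℝ) : ℂ) * (starRingEnd ℂ z₂) ^ 2)).re := by
    refine neg_lt_re_mul_of_norm_lt_one hδ ?_ (by nlinarith [sq_nonneg x₀, sq_nonneg ‖z₂‖])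
    refine (norm_neg_two_mul_conj_sq_add_le _ _ (by positivity) z z₂).trans_eq ?_
    rw [hz]; ring
  linarith
end

section
/- For all real numbers a, b, x, y, p, q with a² + b² = 1, x² + y² = 1 and p² + q² ≤ 3/5, one has (4 + 16b² + 4b⁴ − 8b⁶) − x²·(8b² + 8b⁴ − 16b⁸) − y²·(2 + 2b² − 2b⁴ − 2b⁶) − 6ab·(1 + 3b² − 8b⁶)·x·p − 6ab·(2 + 3b² − b⁴)·y·q > 0. -/
lemma pho_aux1 (t : ℝ) (h0 : 0 ≤ t) (h1 : t ≤ 1) :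
    0 ≤ 53 - 175*t - 161*t^2 + 835*t^3 + 864*t^4 - 1296*t^5 - 1728*t^6 + 1728*t^7 := by
  nlinarith [sq_nonneg (t*(1-t)), sq_nonneg (t^2*(1-t)), sq_nonneg (t^3*(1-t)),
    mul_nonneg h0 (sub_nonneg.2 h1), sq_nonneg (t - 1/3), sq_nonneg t,
    mul_nonneg (mul_nonneg h0 h0) (sub_nonneg.2 h1), sq_nonneg (t^2 - t/2),
    mul_nonneg (mul_nonneg (mul_nonneg h0 h0) h0) (sub_nonneg.2 h1)]

lemma pho_aux0 (t : ℝ) (h0 : 0 ≤ t) (h1 : t ≤ 1) :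
    1 ≤ 32 - 156*t + 129*t^2 + 297*t^3 - 189*t^4 + 27*t^5 := by
  nlinarith [sq_nonneg (t*(1-t)), sq_nonneg (t^2*(1-t)), mul_nonneg h0 (sub_nonneg.2 h1),
    sq_nonneg (t - 1/3), sq_nonneg (t*(t-1/3)), sq_nonneg (t^2 - t/3),
    mul_nonneg (mul_nonneg h0 h0) (sub_nonneg.2 h1), sq_nonneg (t^2 - t/2), sq_nonneg t]

lemma pho_k1 (t : ℝ) (h0 : 0 ≤ t) (h1 : t ≤ 1/100) :
    1 ≤ (4 + 8*t - 4*t^2 - 8*t^3 + 16*t^4) - 9*t*(1-t)*(1+3*t-8*t^3)^2 := by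
  nlinarith [mul_nonneg h0 (sub_nonneg.2 h1), sq_nonneg t, sq_nonneg (t*(1-t)),
    mul_nonneg (mul_nonneg h0 h0) (sub_nonneg.2 h1), sq_nonneg (t^2)]

lemma pho_k0 (t : ℝ) (h0 : 0 ≤ t) (h1 : t ≤ 1/100) :
    1 ≤ (2 + 14*t + 6*t^2 - 6*t^3) - 9*t*(1-t)*(2+3*t-t^2)^2 := by
  nlinarith [mul_nonneg h0 (sub_nonneg.2 h1), sq_nonneg t, sq_nonneg (t*(1-t)),
    mul_nonneg (mul_nonneg h0 h0) (sub_nonneg.2 h1), sq_nonneg (t^2)]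

/-- The key transversality inequality for the developing map of the
`(G₂', Pho^×)`-structures associated to stable α-cyclic Hodge bundles. -/
theorem pho_transversality (a b x y p q : ℝ)
    (hab : a ^ 2 + b ^ 2 = 1) (hxy : x ^ 2 + y ^ 2 = 1)
    (hpq : p ^ 2 + q ^ 2 ≤ 3 / 5) :
    0 < (4 + 16 * b ^ 2 + 4 * b ^ 4 - 8 * b ^ 6)
        - x ^ 2 * (8 * b ^ 2 + 8 * b ^ 4 - 16 * b ^ 8)
        - y ^ 2 * (2 + 2 * b ^ 2 - 2 * b ^ 4 - 2 * b ^ 6)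
        - 6 * a * b * (1 + 3 * b ^ 2 - 8 * b ^ 6) * x * p
        - 6 * a * b * (2 + 3 * b ^ 2 - b ^ 4) * y * q := by
  have hb0 : (0:ℝ) ≤ b^2 := sq_nonneg b
  have hb1 : b^2 ≤ 1 := by nlinarith [sq_nonneg a]
  have hE1 : (a*b*((1+3*b^2-8*b^6)*x))^2 = (1-b^2)*b^2*((1+3*b^2-8*b^6)*x)^2 := by
    linear_combination (b*((1+3*b^2-8*b^6)*x))^2 * hab
  have hE2 : (a*b*((2+3*b^2-b^4)*y))^2 = (1-b^2)*b^2*((2+3*b^2-b^4)*y)^2 := by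
    linear_combination (b*((2+3*b^2-b^4)*y))^2 * hab
  rcases le_or_gt (b^2) (1/100) with hb | hb
  · have hk1 := pho_k1 (b^2) hb0 hb
    have hk0 := pho_k0 (b^2) hb0 hb
    have hE3 : (4+16*b^2+4*b^4-8*b^6)*(x^2+y^2) = 4+16*b^2+4*b^4-8*b^6 := by
      linear_combination (4+16*b^2+4*b^4-8*b^6) * hxy
    linarith [sq_nonneg (3*(a*b*((1+3*b^2-8*b^6)*x)) - p),
      sq_nonneg (3*(a*b*((2+3*b^2-b^4)*y)) - q),
      hE1, hE2, hE3,
      mul_nonneg (sub_nonneg.2 hk1) (sq_nonneg x),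
      mul_nonneg (sub_nonneg.2 hk0) (sq_nonneg y),
      hpq, hxy.le, hxy.ge]
  · have ha1 := pho_aux1 (b^2) hb0 hb1
    have ha0 := pho_aux0 (b^2) hb0 hb1
    have hE3 : (60+480*b^2+120*b^4-240*b^6)*(x^2+y^2) = 60+480*b^2+120*b^4-240*b^6 := by
      linear_combination (60+480*b^2+120*b^4-240*b^6) * hxy
    have hE4 : b^2*(x^2+y^2) = b^2 := by linear_combination b^2 * hxy
    linarith [sq_nonneg (9*(a*b*((1+3*b^2-8*b^6)*x)) - 10*p),
      sq_nonneg (9*(a*b*((2+3*b^2-b^4)*y)) - 10*q),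
      hE1, hE2, hE3, hE4,
      mul_nonneg (mul_nonneg ha1 hb0) (sq_nonneg x),
      mul_nonneg (mul_nonneg (sub_nonneg.2 ha0) hb0) (sq_nonneg y),
      hpq, hb, mul_nonneg (sub_nonneg.2 hb1) (sq_nonneg x), sq_nonneg x, sq_nonneg y]
end
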